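/- Let P and Q be probability distributions on a finite set Ω with P absolutely continuous with respect to Q, and define β₁ ∈ (0, 1] by β₁⁻¹ = max_{w ∈ Ω, Q(w)>0} P(w)/Q(w). If β₁ < 1, then TV(P, Q) ≥ ((1 − β₁) / log₂(1/β₁)) · KL(P ‖ Q), where KL is taken with base-2 logarithms and TV(P,Q) = (1/2) Σ_w |P(w) − Q(w)|. -/

import Mathlib

/-!
On `1 ≤ x ≤ M` the convex function `x ↦ x log x` lies below its chord from `(1, 0)` to
`(M, M log M)`, so every ratio `x = P(w)/Q(w) ≤ M = β⁻¹` satisfies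
`x log x ≤ M log M / (M - 1) · (x - 1)⁺`, while ratios `x ≤ 1` contribute nonpositive terms.
Multiplying by `Q(w)` and summing bounds `KL(P‖Q)` by `M log M / (M - 1) · Σ_w (P(w) - Q(w))⁺`,
and that sum is `TV(P, Q)` because `P` and `Q` have the same total mass. For `M = β⁻¹` the slope
`M log M / (M - 1)` equals `log(1/β) / (1 - β)`.
-/

open scoped BigOperators

noncomputable section

/-- KL divergence with base-2 logarithms: `KL(P‖Q) = Σ_w P(w) log₂(P(w)/Q(w))`,
with the convention that terms with `P(w) = 0` vanish. -/
def klDivb2 {Ω : Type*} [Fintype Ω] (p q : Ω → ℝ) : ℝ :=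
  ∑ w, if p w = 0 then 0 else p w * Real.logb 2 (p w / q w)

/-- Total variation distance `TV(P,Q) = (1/2) Σ_w |P(w) − Q(w)|`. -/
def tvDist {Ω : Type*} [Fintype Ω] (p q : Ω → ℝ) : ℝ :=
  (1 / 2) * ∑ w, |p w - q w|

open Real Set

lemma convexOn_mul_logb {b : ℝ} (hb : 1 < b) : ConvexOn ℝ (Ici 0) fun x ↦ x * logb b x := by
  have hfun : (fun x ↦ x * logb b x) = fun x ↦ (log b)⁻¹ • (x * log x) := by
    ext x
    rw [logb, smul_eq_mul]
    ring
  rw [hfun]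
  exact convexOn_mul_log.smul (inv_nonneg.2 (log_pos hb).le)

lemma mul_logb_le_slope_mul_posPart {b M x : ℝ} (hb : 1 < b) (hM : 1 < M) (hx : 0 ≤ x)
    (hxM : x ≤ M) : x * logb b x ≤ M * logb b M / (M - 1) * (x - 1)⁺ := by
  rcases le_or_gt x 1 with hx1 | hx1
  · rw [posPart_eq_zero.2 (by linarith), mul_zero]
    exact mul_nonpos_of_nonneg_of_nonpos hx (logb_nonpos hb hx hx1)
  · have hslope := (convexOn_mul_logb hb).secant_mono (a := 1) (by simp) hx
      (by simp; linarith) hx1.ne' hM.ne' hxM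
    simp only [logb_one, mul_zero, sub_zero] at hslope
    rw [posPart_eq_self.2 (by linarith), ← div_le_iff₀ (by linarith)]
    exact hslope

lemma mul_logb_div_le_slope_mul_posPart {b M p q : ℝ} (hb : 1 < b) (hM : 1 < M) (hp : 0 ≤ p)
    (hq : 0 < q) (hpq : p ≤ M * q) :
    p * logb b (p / q) ≤ M * logb b M / (M - 1) * (p - q)⁺ := by
  have hx := mul_logb_le_slope_mul_posPart hb hM (div_nonneg hp hq.le)
    ((div_le_iff₀ hq).2 hpq)
  have hscale : (p - q)⁺ = q * (p / q - 1)⁺ := by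
    rw [posPart_def, posPart_def, mul_max_of_nonneg _ _ hq.le, mul_zero, mul_sub,
      mul_div_cancel₀ _ hq.ne', mul_one]
  calc p * logb b (p / q) = q * (p / q * logb b (p / q)) := by field_simp
    _ ≤ q * (M * logb b M / (M - 1) * (p / q - 1)⁺) := mul_le_mul_of_nonneg_left hx hq.le
    _ = M * logb b M / (M - 1) * (p - q)⁺ := by rw [hscale]; ring

lemma klDivb2_le_slope_mul_sum_posPart {Ω : Type*} [Fintype Ω] {p q : Ω → ℝ} {M : ℝ}
    (hM : 1 < M) (hp : ∀ w, 0 ≤ p w) (hpq : ∀ w, p w ≤ M * q w) :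
    klDivb2 p q ≤ M * logb 2 M / (M - 1) * ∑ w, (p w - q w)⁺ := by
  rw [klDivb2, Finset.mul_sum]
  refine Finset.sum_le_sum fun w _ ↦ ?_
  split_ifs with hpw
  · have := logb_nonneg one_lt_two hM.le
    have := sub_pos.2 hM
    positivity
  · have hqw : 0 < q w :=
      pos_of_mul_pos_right ((hp w).lt_of_ne' hpw |>.trans_le (hpq w)) (by linarith)
    exact mul_logb_div_le_slope_mul_posPart one_lt_two hM (hp w) hqw (hpq w)

lemma tvDist_eq_sum_posPart {Ω : Type*} [Fintype Ω] {p q : Ω → ℝ} (h : ∑ w, p w = ∑ w, q w) :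
    tvDist p q = ∑ w, (p w - q w)⁺ := by
  have hsum : ∑ w, |p w - q w| + ∑ w, (p w - q w) = 2 • ∑ w, (p w - q w)⁺ := by
    simp only [← Finset.sum_add_distrib, abs_add_eq_two_nsmul_posPart, Finset.smul_sum]
  rw [Finset.sum_sub_distrib, h, sub_self, add_zero, two_nsmul] at hsum
  rw [tvDist, hsum]
  ring

/-- **Reverse Pinsker inequality** (Theorem 7 of Verdú 2014).  If `P ≪ Q` on a finite
set and `β⁻¹ = max_{w : Q(w)>0} P(w)/Q(w)` with `0 < β < 1`, then
`TV(P,Q) ≥ ((1 − β)/log₂(1/β))·KL(P‖Q)`. -/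
theorem reverse_pinsker
    {Ω : Type*} [Fintype Ω]
    (P Q : Ω → ℝ)
    (hP : (∀ w, 0 ≤ P w) ∧ ∑ w, P w = 1)
    (hQ : (∀ w, 0 ≤ Q w) ∧ ∑ w, Q w = 1)
    (hac : ∀ w, Q w = 0 → P w = 0)
    (β : ℝ) (hβpos : 0 < β) (hβlt : β < 1)
    (hβdef : IsGreatest {r : ℝ | ∃ w, 0 < Q w ∧ r = P w / Q w} β⁻¹) :
    ((1 - β) / Real.logb 2 (1 / β)) * klDivb2 P Q ≤ tvDist P Q := by
  have hratio : ∀ w, P w ≤ β⁻¹ * Q w := by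
    intro w
    rcases (hQ.1 w).lt_or_eq with hQw | hQw
    · exact (div_le_iff₀ hQw).1 (hβdef.2 ⟨w, hQw, rfl⟩)
    · rw [hac w hQw.symm, ← hQw, mul_zero]
  have hβ1 : 0 < 1 - β := sub_pos.2 hβlt
  have hM : 1 < β⁻¹ := (one_lt_inv₀ hβpos).2 hβlt
  have hL : 0 < logb 2 (1 / β) := logb_pos one_lt_two (by rwa [one_div])
  have hslope : β⁻¹ * logb 2 β⁻¹ / (β⁻¹ - 1) = logb 2 (1 / β) / (1 - β) := by
    rw [one_div]
    field_simp
  have hkl := klDivb2_le_slope_mul_sum_posPart hM hP.1 hratio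
  rw [hslope, ← tvDist_eq_sum_posPart (hP.2.trans hQ.2.symm)] at hkl
  calc (1 - β) / logb 2 (1 / β) * klDivb2 P Q
      ≤ (1 - β) / logb 2 (1 / β) * (logb 2 (1 / β) / (1 - β) * tvDist P Q) := by
        gcongr
    _ = tvDist P Q := by
        field_simp
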